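/- Let h₀ ⊂ h₁ ⊂ ⋯ ⊂ h_N be a chain of distinct pairwise strongly separated half-spaces in a finite-dimensional CAT(0) cubical complex X. Then for every 0 < k < N, the Gromov product in the contact graph satisfies (ĥ₀ | ĥ_N)_{ĥ_k} ≤ 3. -/

import Mathlib

/-!
A combinatorial model of a finite-dimensional CAT(0) cubical complex:
the vertex set `V` together with its collection of half-spaces `HS ⊆ Set V`,
axiomatized as a pocset of subsets of `V` whose dual (Sageev) complex has
vertex set exactly `V`.
-/

open Set

variable {V : Type*}

/-- Two half-spaces are transverse if all four corner intersections are nonempty. -/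
def Transverse (h k : Set V) : Prop :=
  (h ∩ k).Nonempty ∧ (hᶜ ∩ k).Nonempty ∧ (h ∩ kᶜ).Nonempty ∧ (hᶜ ∩ kᶜ).Nonempty

lemma Transverse.symm {h k : Set V} (t : Transverse h k) : Transverse k h := by
  obtain ⟨a, b, c, d⟩ := t
  refine ⟨?_, ?_, ?_, ?_⟩ <;> rw [Set.inter_comm] <;> assumption

/-- `h` and `k` bound the same hyperplane (they are equal or complementary). -/
def SameHyp (h k : Set V) : Prop := k = h ∨ k = hᶜ

lemma SameHyp.symm {h k : Set V} (s : SameHyp h k) : SameHyp k h := by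
  rcases s with rfl | rfl
  · exact Or.inl rfl
  · exact Or.inr (compl_compl h).symm

/-- A model of a finite-dimensional CAT(0) cubical complex with vertex set `V`. -/
structure CubicalCpx (V : Type*) where
  /-- the collection of half-spaces -/
  HS : Set (Set V)
  compl_mem : ∀ h ∈ HS, hᶜ ∈ HS
  proper : ∀ h ∈ HS, h.Nonempty ∧ hᶜ.Nonempty
  /-- finitely many hyperplanes separate two vertices -/
  finite_sep : ∀ x y : V, {h ∈ HS | x ∈ h ∧ y ∉ h}.Finite
  /-- distinct vertices are separated by a hyperplane -/
  sep : ∀ x y : V, x ≠ y → ∃ h ∈ HS, x ∈ h ∧ y ∉ h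
  /-- finite dimensionality: a bound on families of pairwise transverse hyperplanes -/
  dim : ℕ
  finite_dim : ∀ T : Finset (Set V), ↑T ⊆ HS →
    (∀ h ∈ T, ∀ k ∈ T, h ≠ k → Transverse h k) → T.card ≤ dim
  /-- every consistent total orientation satisfying the descending chain condition
  is the ultrafilter of half-spaces of an actual vertex (Sageev--Roller duality) -/
  realized : ∀ ω : Set (Set V), ω ⊆ HS →
    (∀ h ∈ HS, h ∈ ω ↔ hᶜ ∉ ω) →
    (∀ h ∈ ω, ∀ k ∈ ω, (h ∩ k).Nonempty) →
    (∀ f : ℕ → Set V, (∀ n, f n ∈ ω) → (∀ n, f (n + 1) ⊆ f n) → ∃ n, f (n + 1) = f n) →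
    ∃ x : V, ω = {h ∈ HS | x ∈ h}

namespace CubicalCpx

variable (C : CubicalCpx V)

/-- `h ⊊ k` tightly nested: no half-space of the complex lies properly between them. -/
def TightlyNested (h k : Set V) : Prop :=
  h ⊂ k ∧ ∀ l ∈ C.HS, h ⊆ l → l ⊆ k → l = h ∨ l = k

/-- tightly nested up to a choice of orientations of the two hyperplanes -/
def TightContact (h k : Set V) : Prop :=
  ∃ h' k', SameHyp h h' ∧ SameHyp k k' ∧ C.TightlyNested h' k'

/-- Two half-spaces (hyperplanes) are strongly separated if they are parallel
(not transverse) and no hyperplane of the complex is transverse to both. -/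
def StronglySeparated (h k : Set V) : Prop :=
  ¬ Transverse h k ∧ ∀ l ∈ C.HS, ¬ (Transverse l h ∧ Transverse l k)

/-- The contact graph: vertices are the hyperplanes of `X` (here represented by
their half-spaces, with both orientations of a hyperplane at graph distance `0`
from each other being excluded by `¬ SameHyp`), and two distinct hyperplanes are
adjacent iff they are transverse or tightly nested. -/
def contactGraph : SimpleGraph C.HS where
  Adj h k := ¬ SameHyp (h : Set V) k ∧
    (Transverse (h : Set V) k ∨ C.TightContact h k ∨ C.TightContact k h)
  symm := by
    constructor
    rintro a b ⟨ns, r⟩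
    refine ⟨fun s => ns s.symm, ?_⟩
    rcases r with t | tc | tc
    · exact Or.inl t.symm
    · exact Or.inr (Or.inr tc)
    · exact Or.inr (Or.inl tc)
  loopless := ⟨fun a ha => ha.1 (Or.inl rfl)⟩

/-- the combinatorial metric: the number of hyperplanes separating two vertices -/
noncomputable def dist (x y : V) : ℕ := {h ∈ C.HS | x ∈ h ∧ y ∉ h}.ncard

end CubicalCpx

/-!
Take a geodesic of the contact graph from `ĥ₀` to `ĥ_N`. Its first hyperplane lies in `h_k` and
its last one in `h_kᶜ`, while consecutive hyperplanes are transverse or tightly nested, and a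
tightly nested pair can only straddle `ĥ_k` if one of the two is `ĥ_k`. So some hyperplane of the
geodesic is `ĥ_k` or crosses it: `ĥ_k` is within distance `1` of the geodesic, whence
`d(ĥ₀, ĥ_k) + d(ĥ_k, ĥ_N) ≤ d(ĥ₀, ĥ_N) + 2`.
-/

namespace SimpleGraph

variable {α : Type*} {G : SimpleGraph α}

theorem Walk.edist_add_edist_le_length [DecidableEq α] {u v w : α} (p : G.Walk u v)
    (hw : w ∈ p.support) : G.edist u w + G.edist w v ≤ p.length :=
  calc G.edist u w + G.edist w v
      ≤ (p.takeUntil w hw).length + (p.dropUntil w hw).length :=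
        add_le_add (edist_le _) (edist_le _)
    _ = p.length := by rw [← Nat.cast_add, ← Walk.length_append, Walk.take_spec]

theorem edist_le_edist_of_forall_adj_imp {a b x : α} (hab : ∀ y, G.Adj y a → G.Adj y b)
    (hx : x ≠ a) : G.edist x b ≤ G.edist x a := by
  by_cases hreach : G.Reachable x a
  · obtain ⟨p, hp⟩ := hreach.exists_walk_length_eq_edist
    have hnil : ¬ p.Nil := fun h => hx h.eq
    rw [← hp, ← Walk.length_dropLast_add_one hnil, ← Walk.length_concat]
    exact edist_le (p.dropLast.concat (hab _ (p.adj_penultimate hnil)))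
  · simp [edist_eq_top_of_not_reachable hreach]

end SimpleGraph

section HalfSpaces

variable {h k w a b : Set V}

lemma sameHyp_compl_left : SameHyp hᶜ k ↔ SameHyp h k := by
  simp only [SameHyp, compl_compl, or_comm]

lemma sameHyp_compl_right : SameHyp h kᶜ ↔ SameHyp h k := by
  rw [SameHyp, SameHyp, compl_eq_comm, compl_inj_iff, eq_comm (a := hᶜ), or_comm]

lemma transverse_compl_right : Transverse h kᶜ ↔ Transverse h k := by
  simp only [Transverse, compl_compl]
  tauto

lemma Transverse.not_sameHyp (t : Transverse h k) : ¬ SameHyp h k := by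
  rintro (rfl | rfl)
  · obtain ⟨x, hx, hx'⟩ := t.2.1
    exact hx hx'
  · obtain ⟨x, hx, hx'⟩ := t.1
    exact hx' hx

/-- The hyperplane `ŵ` lies in the closed half-space `k`. -/
def HyperplaneIn (w k : Set V) : Prop := w ⊆ k ∨ wᶜ ⊆ k

lemma HyperplaneIn.of_sameHyp (hw : HyperplaneIn w k) (hs : SameHyp w a) : HyperplaneIn a k := by
  rcases hs with rfl | rfl
  · exact hw
  · rw [HyperplaneIn, compl_compl]
    exact hw.symm

lemma hyperplaneIn_or_hyperplaneIn_compl (ht : ¬ Transverse w k) :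
    HyperplaneIn w k ∨ HyperplaneIn w kᶜ := by
  simp only [Transverse, not_and_or, not_nonempty_iff_eq_empty, ← disjoint_iff_inter_eq_empty,
    ← subset_compl_iff_disjoint_right, compl_compl] at ht
  unfold HyperplaneIn
  tauto

lemma sameHyp_of_hyperplaneIn_of_hyperplaneIn_compl (hw : w.Nonempty) (hw' : wᶜ.Nonempty)
    (hk : HyperplaneIn w k) (hk' : HyperplaneIn w kᶜ) : SameHyp k w := by
  rcases hk with hk | hk <;> rcases hk' with hk' | hk'
  · obtain ⟨x, hx⟩ := hw
    exact (hk' hx (hk hx)).elim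
  · exact Or.inl (hk.antisymm (compl_subset_compl.mp hk'))
  · exact Or.inr ((compl_subset_comm.mp hk).antisymm' hk')
  · obtain ⟨x, hx⟩ := hw'
    exact (hk' hx (hk hx)).elim

lemma Transverse.not_hyperplaneIn_compl (t : Transverse a b) (ha : HyperplaneIn a k) :
    ¬ HyperplaneIn b kᶜ := by
  obtain ⟨t₁, t₂, t₃, t₄⟩ := t
  rintro (hb | hb) <;> rcases ha with ha | ha
  · obtain ⟨x, hxa, hxb⟩ := t₁; exact hb hxb (ha hxa)
  · obtain ⟨x, hxa, hxb⟩ := t₂; exact hb hxb (ha hxa)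
  · obtain ⟨x, hxa, hxb⟩ := t₃; exact hb hxb (ha hxa)
  · obtain ⟨x, hxa, hxb⟩ := t₄; exact hb hxb (ha hxa)

end HalfSpaces

namespace CubicalCpx

variable (C : CubicalCpx V) {h k w w' a b : Set V}

lemma tightContact_compl_left : C.TightContact hᶜ k ↔ C.TightContact h k := by
  simp only [TightContact, sameHyp_compl_left]

lemma tightContact_compl_right : C.TightContact h kᶜ ↔ C.TightContact h k := by
  simp only [TightContact, sameHyp_compl_left]

lemma mem_HS_of_sameHyp (hw : w ∈ C.HS) (hs : SameHyp w a) : a ∈ C.HS := by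
  rcases hs with rfl | rfl
  exacts [hw, C.compl_mem w hw]

variable {C}

lemma TightlyNested.eq_or_eq_of_hyperplaneIn (htn : C.TightlyNested a b) (hk : k ∈ C.HS)
    (ha : a ∈ C.HS) (hb : b ∈ C.HS) (hak : HyperplaneIn a k) (hbk : HyperplaneIn b kᶜ) :
    a = k ∨ b = k := by
  obtain ⟨hab, htight⟩ := htn
  rcases hak with hak | hak <;> rcases hbk with hbk | hbk
  · obtain ⟨x, hx⟩ := (C.proper a ha).1
    exact (hbk (hab.subset hx) (hak hx)).elim
  · rcases htight k hk hak (compl_subset_compl.mp hbk) with h | h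
    exacts [Or.inl h.symm, Or.inr h.symm]
  · exact (hab.not_subset (hbk.trans (compl_subset_comm.mp hak))).elim
  · obtain ⟨x, hx⟩ := (C.proper b hb).2
    exact (hx (hab.subset (compl_subset_comm.mp hak (hbk hx)))).elim

lemma TightContact.sameHyp_of_hyperplaneIn (htc : C.TightContact w w') (hk : k ∈ C.HS)
    (hw : w ∈ C.HS) (hw' : w' ∈ C.HS) (hwk : HyperplaneIn w k) (hw'k : HyperplaneIn w' kᶜ) :
    SameHyp k w ∨ SameHyp k w' := by
  obtain ⟨a, b, hwa, hw'b, htn⟩ := htc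
  rcases htn.eq_or_eq_of_hyperplaneIn hk (C.mem_HS_of_sameHyp hw hwa)
      (C.mem_HS_of_sameHyp hw' hw'b) (hwk.of_sameHyp hwa) (hw'k.of_sameHyp hw'b) with rfl | rfl
  exacts [Or.inl hwa.symm, Or.inr hw'b.symm]

lemma sameHyp_of_adj_of_hyperplaneIn {x y : C.HS} (hxy : C.contactGraph.Adj x y)
    (hk : k ∈ C.HS) (hx : HyperplaneIn (x : Set V) k) (hy : HyperplaneIn (y : Set V) kᶜ) :
    SameHyp k x ∨ SameHyp k y := by
  rcases hxy.2 with t | htc | htc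
  · exact (t.not_hyperplaneIn_compl hx hy).elim
  · exact htc.sameHyp_of_hyperplaneIn hk x.2 y.2 hx hy
  · rw [← compl_compl k] at hx
    simpa only [sameHyp_compl_left, or_comm] using
      htc.sameHyp_of_hyperplaneIn (C.compl_mem k hk) y.2 x.2 hy hx

lemma exists_mem_support_transverse_or_sameHyp (hk : k ∈ C.HS) {u v : C.HS}
    (p : C.contactGraph.Walk u v) (hu : HyperplaneIn (u : Set V) k)
    (hv : HyperplaneIn (v : Set V) kᶜ) :
    ∃ w ∈ p.support, Transverse (w : Set V) k ∨ SameHyp k w := by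
  induction p with
  | @nil w =>
    exact ⟨w, List.mem_singleton_self w, Or.inr (sameHyp_of_hyperplaneIn_of_hyperplaneIn_compl
      (C.proper _ w.2).1 (C.proper _ w.2).2 hu hv)⟩
  | @cons u u' v hadj q ih =>
    by_cases ht : Transverse (u' : Set V) k
    · exact ⟨u', by simp, Or.inl ht⟩
    rcases hyperplaneIn_or_hyperplaneIn_compl ht with hu' | hu'
    · obtain ⟨w, hwq, hw⟩ := ih hu' hv
      exact ⟨w, List.mem_cons_of_mem _ hwq, hw⟩
    · rcases sameHyp_of_adj_of_hyperplaneIn hadj hk hu hu' with hs | hs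
      exacts [⟨u, by simp, Or.inr hs⟩, ⟨u', by simp, Or.inr hs⟩]

lemma contactGraph_adj_compl_iff {y : C.HS} (hk : k ∈ C.HS) :
    C.contactGraph.Adj y ⟨kᶜ, C.compl_mem k hk⟩ ↔ C.contactGraph.Adj y ⟨k, hk⟩ := by
  simp only [contactGraph, sameHyp_compl_right, transverse_compl_right,
    tightContact_compl_left, tightContact_compl_right]

/-- The two orientations `k`, `kᶜ` are distinct, non-adjacent vertices of the contact graph with
the same neighbours; hence the hypothesis `x ≠ kᶜ`. -/
lemma edist_le_edist_add_one_of_transverse_or_sameHyp (hk : k ∈ C.HS) {x w : C.HS}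
    (hw : Transverse (w : Set V) k ∨ SameHyp k w) (hx : (x : Set V) ≠ kᶜ) :
    C.contactGraph.edist x ⟨k, hk⟩ ≤ C.contactGraph.edist x w + 1 := by
  obtain ⟨w, hwH⟩ := w
  rcases hw with t | rfl | rfl
  · refine SimpleGraph.edist_triangle.trans (add_le_add le_rfl (le_of_eq ?_))
    exact SimpleGraph.edist_eq_one_iff_adj.mpr ⟨t.not_sameHyp, Or.inl t⟩
  · exact le_self_add
  · exact le_add_right (SimpleGraph.edist_le_edist_of_forall_adj_imp
      (fun y => (contactGraph_adj_compl_iff hk).mp) fun he => hx (congrArg Subtype.val he))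

end CubicalCpx

/-- If `h 0 ⊂ h 1 ⊂ ⋯ ⊂ h N` is a chain of distinct pairwise
strongly separated half-spaces, then for every `0 < k < N` the Gromov product in
the contact graph satisfies `(ĥ 0 | ĥ N)_{ĥ k} ≤ 3`; equivalently
`d(ĥ 0, ĥ k) + d(ĥ N, ĥ k) ≤ d(ĥ 0, ĥ N) + 6`. -/
theorem stmt4 (C : CubicalCpx V) (N : ℕ) (hs : ℕ → Set V)
    (hmem : ∀ i, i ≤ N → hs i ∈ C.HS)
    (hchain : ∀ i j, i < j → j ≤ N →
      hs i ⊂ hs j ∧ C.StronglySeparated (hs i) (hs j)) :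
    ∀ k, 0 < k → (hk : k < N) →
      C.contactGraph.edist ⟨hs 0, hmem 0 (Nat.zero_le N)⟩ ⟨hs k, hmem k hk.le⟩
          + C.contactGraph.edist ⟨hs N, hmem N le_rfl⟩ ⟨hs k, hmem k hk.le⟩ ≤
        C.contactGraph.edist ⟨hs 0, hmem 0 (Nat.zero_le N)⟩ ⟨hs N, hmem N le_rfl⟩
          + 6 := by
  intro k hk0 hkN
  set G := C.contactGraph
  set u : C.HS := ⟨hs 0, hmem 0 (Nat.zero_le N)⟩
  set v : C.HS := ⟨hs N, hmem N le_rfl⟩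
  have hkH := hmem k hkN.le
  have h0k : hs 0 ⊆ hs k := (hchain 0 k hk0 hkN.le).1.subset
  have hkN' : hs k ⊆ hs N := (hchain k N hkN le_rfl).1.subset
  by_cases hreach : G.Reachable u v
  · obtain ⟨p, hp⟩ := hreach.exists_walk_length_eq_edist
    obtain ⟨w, hwp, hw⟩ := C.exists_mem_support_transverse_or_sameHyp hkH p
      (Or.inl h0k) (Or.inr (compl_subset_compl.mpr hkN'))
    have hu : hs 0 ≠ (hs k)ᶜ := fun he => by
      obtain ⟨y, hy⟩ := (C.proper _ hkH).2
      exact hy (h0k (he ▸ hy))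
    have hv : hs N ≠ (hs k)ᶜ := fun he => by
      obtain ⟨y, hy⟩ := (C.proper _ hkH).1
      exact (he ▸ hkN' hy) hy
    calc G.edist u ⟨hs k, hkH⟩ + G.edist v ⟨hs k, hkH⟩
        ≤ (G.edist u w + 1) + (G.edist v w + 1) :=
          add_le_add (C.edist_le_edist_add_one_of_transverse_or_sameHyp hkH hw hu)
            (C.edist_le_edist_add_one_of_transverse_or_sameHyp hkH hw hv)
      _ = G.edist u w + G.edist w v + 2 := by rw [SimpleGraph.edist_comm (u := v)]; ring
      _ ≤ G.edist u v + 2 := by gcongr; exact hp ▸ p.edist_add_edist_le_length hwp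
      _ ≤ G.edist u v + 6 := by gcongr; norm_num
  · simp [G, SimpleGraph.edist_eq_top_of_not_reachable hreach]
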